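/- Complete reduction ⇛ satisfies the diamond property: if M ⇛ N and M ⇛ P, then there exists a term Q such that N ⇛ Q and P ⇛ Q. -/

import Mathlib

/-!
Parallel duplicating reduction has the diamond property (Tait–Martin-Löf), and affine reduction is
terminating and locally confluent, hence confluent with unique normal forms (Newman). A single
affine step commutes with a parallel step up to further affine steps on both sides, so a parallel
step out of a term carries over to a parallel step out of its affine normal form.

Given `M ⇒ P₁ ↠ N` and `M ⇒ P₂ ↠ P`, close `P₁ ⇒ Q₀ ⇐ P₂`, carry both steps to the normal forms as
`N ⇒ Q₁ ↞ Q₀` and `P ⇒ Q₂ ↞ Q₀`, and let `Q` be the normal form of `Q₀`: by confluence `Q₁` and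
`Q₂` both normalize to `Q`.
-/

variable {Loc Ch : Type}

/-- FMC terms: variable, push `[N]a.M`, pop `a<x>.M` (de Bruijn binder),
choice `i`, case `M ; i -> N`, and loop `M^i`. -/
inductive Tm (Loc Ch : Type) : Type where
  | var : ℕ → Tm Loc Ch
  | push : Tm Loc Ch → Loc → Tm Loc Ch → Tm Loc Ch
  | pop : Loc → Tm Loc Ch → Tm Loc Ch
  | choice : Ch → Tm Loc Ch
  | caseOf : Tm Loc Ch → Ch → Tm Loc Ch → Tm Loc Ch
  | loop : Tm Loc Ch → Ch → Tm Loc Ch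

namespace Tm

/-- Shift the free de Bruijn indices `≥ d` up by one. -/
def lift : Tm Loc Ch → ℕ → Tm Loc Ch
  | var n, d => if n < d then var n else var (n + 1)
  | push N a M, d => push (N.lift d) a (M.lift d)
  | pop a M, d => pop a (M.lift (d + 1))
  | choice i, _ => choice i
  | caseOf M i N, d => caseOf (M.lift d) i (N.lift d)
  | loop M i, d => loop (M.lift d) i

/-- Capture-avoiding substitution `{N/k}M` for the de Bruijn index `k`. -/
def subst : Tm Loc Ch → ℕ → Tm Loc Ch → Tm Loc Ch
  | var n, k, N => if n = k then N else if n < k then var n else var (n - 1)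
  | push P a M, k, N => push (P.subst k N) a (M.subst k N)
  | pop a M, k, N => pop a (M.subst (k + 1) (N.lift 0))
  | choice i, _, _ => choice i
  | caseOf M i P, k, N => caseOf (M.subst k N) i (P.subst k N)
  | loop M i, k, N => loop (M.subst k N) i

end Tm

/-- Affine reduction: the contextual closure of the rules passage, select,
reject, prefix(pop), prefix(push), associate. -/
inductive AffStep : Tm Loc Ch → Tm Loc Ch → Prop where
  | passage (N : Tm Loc Ch) (a b : Loc) (M : Tm Loc Ch) (h : a ≠ b) :
      AffStep (.push N b (.pop a M)) (.pop a (.push (N.lift 0) b M))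
  | select (i : Ch) (M : Tm Loc Ch) :
      AffStep (.caseOf (.choice i) i M) M
  | reject (i j : Ch) (M : Tm Loc Ch) (h : i ≠ j) :
      AffStep (.caseOf (.choice i) j M) (.choice i)
  | prefixPop (a : Loc) (N : Tm Loc Ch) (i : Ch) (M : Tm Loc Ch) :
      AffStep (.caseOf (.pop a N) i M) (.pop a (.caseOf N i (M.lift 0)))
  | prefixPush (P : Tm Loc Ch) (a : Loc) (N : Tm Loc Ch) (i : Ch) (M : Tm Loc Ch) :
      AffStep (.caseOf (.push P a N) i M) (.push P a (.caseOf N i M))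
  | assoc (P : Tm Loc Ch) (i : Ch) (N M : Tm Loc Ch) :
      AffStep (.caseOf (.caseOf P i N) i M) (.caseOf P i (.caseOf N i M))
  | push_left (N N' : Tm Loc Ch) (a : Loc) (M : Tm Loc Ch) :
      AffStep N N' → AffStep (.push N a M) (.push N' a M)
  | push_right (N : Tm Loc Ch) (a : Loc) (M M' : Tm Loc Ch) :
      AffStep M M' → AffStep (.push N a M) (.push N a M')
  | pop_body (a : Loc) (M M' : Tm Loc Ch) :
      AffStep M M' → AffStep (.pop a M) (.pop a M')
  | case_left (M M' : Tm Loc Ch) (i : Ch) (N : Tm Loc Ch) :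
      AffStep M M' → AffStep (.caseOf M i N) (.caseOf M' i N)
  | case_right (M : Tm Loc Ch) (i : Ch) (N N' : Tm Loc Ch) :
      AffStep N N' → AffStep (.caseOf M i N) (.caseOf M i N')
  | loop_body (M M' : Tm Loc Ch) (i : Ch) :
      AffStep M M' → AffStep (.loop M i) (.loop M' i)

/-- Parallel duplicating reduction `M ⇒_dup N`: `N` is the marked reduct of
`M` for some marking of beta- and unroll-redexes. -/
inductive Par : Tm Loc Ch → Tm Loc Ch → Prop where
  | var (n : ℕ) : Par (.var n) (.var n)
  | choice (i : Ch) : Par (.choice i) (.choice i)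
  | push (N N' : Tm Loc Ch) (a : Loc) (M M' : Tm Loc Ch) :
      Par N N' → Par M M' → Par (.push N a M) (.push N' a M')
  | pop (a : Loc) (M M' : Tm Loc Ch) :
      Par M M' → Par (.pop a M) (.pop a M')
  | caseOf (M M' : Tm Loc Ch) (i : Ch) (N N' : Tm Loc Ch) :
      Par M M' → Par N N' → Par (.caseOf M i N) (.caseOf M' i N')
  | loop (M M' : Tm Loc Ch) (i : Ch) :
      Par M M' → Par (.loop M i) (.loop M' i)
  | beta (N N' : Tm Loc Ch) (a : Loc) (M M' : Tm Loc Ch) :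
      Par N N' → Par M M' → Par (.push N a (.pop a M)) (M'.subst 0 N')
  | unroll (M M' : Tm Loc Ch) (i : Ch) :
      Par M M' → Par (.loop M i) (.caseOf M' i (.loop M' i))

/-- `P` is an affine normal form of `M`. -/
def AffNF (M P : Tm Loc Ch) : Prop :=
  Relation.ReflTransGen AffStep M P ∧ ∀ Q, ¬ AffStep P Q

/-- Complete reduction `M ⇛ N`: a parallel duplicating step followed by
affine normalization. -/
def Comp (M N : Tm Loc Ch) : Prop :=
  ∃ P, Par M P ∧ AffNF P N

namespace Relation

variable {α : Type*}

def Diamond (p : α → α → Prop) : Prop :=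
  ∀ ⦃a b c⦄, p a b → p a c → Join p b c

def Confluent (r : α → α → Prop) : Prop :=
  Diamond (ReflTransGen r)

def LocallyConfluent (r : α → α → Prop) : Prop :=
  ∀ ⦃a b c⦄, r a b → r a c → Join (ReflTransGen r) b c

def Normal (r : α → α → Prop) (a : α) : Prop :=
  ∀ b, ¬ r a b

variable {r p : α → α → Prop}

theorem LocallyConfluent.confluent (hwf : WellFounded (flip r)) (hlc : LocallyConfluent r) :
    Confluent r := by
  intro a
  induction a using hwf.induction with
  | _ a ih =>
  intro b c hab hac
  rcases hab.cases_head with rfl | ⟨b₁, hab₁, hb₁b⟩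
  · exact ⟨c, hac, .refl⟩
  rcases hac.cases_head with rfl | ⟨c₁, hac₁, hc₁c⟩
  · exact ⟨b, .refl, .head hab₁ hb₁b⟩
  obtain ⟨d, hb₁d, hc₁d⟩ := hlc hab₁ hac₁
  obtain ⟨e, hbe, hde⟩ := ih b₁ hab₁ hb₁b hb₁d
  obtain ⟨f, hcf, hef⟩ := ih c₁ hac₁ hc₁c (hc₁d.trans hde)
  exact ⟨f, hbe.trans hef, hcf⟩

theorem exists_normal (hwf : WellFounded (flip r)) (a : α) :
    ∃ n, ReflTransGen r a n ∧ Normal r n := by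
  induction a using hwf.induction with
  | _ a ih =>
  by_cases ha : Normal r a
  · exact ⟨a, .refl, ha⟩
  obtain ⟨a₁, haa₁⟩ := not_forall_not.1 ha
  obtain ⟨n, ha₁n, hn⟩ := ih a₁ haa₁
  exact ⟨n, .head haa₁ ha₁n, hn⟩

theorem Confluent.reflTransGen_normal (hconf : Confluent r) {a b n : α}
    (han : ReflTransGen r a n) (hn : Normal r n) (hab : ReflTransGen r a b) :
    ReflTransGen r b n := by
  obtain ⟨c, hnc, hbc⟩ := hconf han hab
  rcases hnc.cases_head with rfl | ⟨d, hnd, -⟩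
  · exact hbc
  · exact absurd hnd (hn d)

theorem Confluent.exists_reflTransGen_of_normal (hwf : WellFounded (flip r))
    (hconf : Confluent r)
    (hcomm : ∀ ⦃a a₁ q⦄, r a a₁ → p a q →
      ∃ a₂ q₁, ReflTransGen r a₁ a₂ ∧ ReflTransGen r q q₁ ∧ p a₂ q₁)
    ⦃a n q : α⦄ (han : ReflTransGen r a n) (hn : Normal r n) (hq : p a q) :
    ∃ q', ReflTransGen r q q' ∧ p n q' := by
  induction a using hwf.transGen.induction generalizing q with
  | _ a ih =>
  rcases han.cases_head with rfl | ⟨a₁, haa₁, -⟩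
  · exact ⟨q, .refl, hq⟩
  obtain ⟨a₂, q₁, ha₁a₂, hqq₁, ha₂q₁⟩ := hcomm haa₁ hq
  have haa₂ : TransGen r a a₂ := .head' haa₁ ha₁a₂
  obtain ⟨q', hq₁q', hnq'⟩ := ih a₂ (transGen_swap.2 haa₂)
    (hconf.reflTransGen_normal han hn haa₂.to_reflTransGen) ha₂q₁
  exact ⟨q', hqq₁.trans hq₁q', hnq'⟩

end Relation

namespace Tm

theorem lift_lift (M : Tm Loc Ch) {i j : ℕ} (h : i ≤ j) :
    (M.lift j).lift i = (M.lift i).lift (j + 1) := by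
  induction M generalizing i j with
  | var n => grind [lift]
  | pop a M ih => simp [lift, ih (Nat.succ_le_succ h)]
  | _ => simp_all [lift]

theorem lift_subst_of_le (M N : Tm Loc Ch) {d k : ℕ} (h : d ≤ k) :
    (M.subst k N).lift d = (M.lift d).subst (k + 1) (N.lift d) := by
  induction M generalizing N d k with
  | var n => grind [lift, subst]
  | pop a M ih =>
    simp only [lift, subst, ih _ (Nat.succ_le_succ h), lift_lift N (Nat.zero_le d)]
  | _ => simp_all [lift, subst]

theorem lift_subst_of_ge (M N : Tm Loc Ch) {d k : ℕ} (h : k ≤ d) :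
    (M.subst k N).lift d = (M.lift (d + 1)).subst k (N.lift d) := by
  induction M generalizing N d k with
  | var n => grind [lift, subst]
  | pop a M ih =>
    simp only [lift, subst, ih _ (Nat.succ_le_succ h), lift_lift N (Nat.zero_le d)]
  | _ => simp_all [lift, subst]

theorem subst_lift (M N : Tm Loc Ch) (k : ℕ) : (M.lift k).subst k N = M := by
  induction M generalizing N k with
  | var n => grind [lift, subst]
  | _ => simp_all [lift, subst]

theorem subst_subst (M N P : Tm Loc Ch) {j k : ℕ} (h : j ≤ k) :
    (M.subst j N).subst k P = (M.subst (k + 1) (P.lift j)).subst j (N.subst k P) := by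
  induction M generalizing N P j k with
  | var n => grind [lift, subst, subst_lift]
  | pop a M ih =>
    simp only [subst, ih _ _ (Nat.succ_le_succ h), lift_lift P (Nat.zero_le j),
      lift_subst_of_le N P (Nat.zero_le k)]
  | _ => simp_all [subst]

end Tm

open Tm

abbrev AffSteps (M N : Tm Loc Ch) : Prop := Relation.ReflTransGen AffStep M N

namespace AffSteps

open Relation.ReflTransGen (lift)

theorem push_left {N N' : Tm Loc Ch} (a : Loc) (M : Tm Loc Ch) (h : AffSteps N N') :
    AffSteps (push N a M) (push N' a M) :=
  lift (push · a M) (fun _ _ => .push_left _ _ _ _) _ _ h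

theorem push_right (N : Tm Loc Ch) (a : Loc) {M M' : Tm Loc Ch} (h : AffSteps M M') :
    AffSteps (push N a M) (push N a M') :=
  lift (push N a ·) (fun _ _ => .push_right _ _ _ _) _ _ h

theorem pop_body (a : Loc) {M M' : Tm Loc Ch} (h : AffSteps M M') :
    AffSteps (pop a M) (pop a M') :=
  lift (pop a ·) (fun _ _ => .pop_body _ _ _) _ _ h

theorem case_left {M M' : Tm Loc Ch} (i : Ch) (N : Tm Loc Ch) (h : AffSteps M M') :
    AffSteps (caseOf M i N) (caseOf M' i N) :=
  lift (caseOf · i N) (fun _ _ => .case_left _ _ _ _) _ _ h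

theorem case_right (M : Tm Loc Ch) (i : Ch) {N N' : Tm Loc Ch} (h : AffSteps N N') :
    AffSteps (caseOf M i N) (caseOf M i N') :=
  lift (caseOf M i ·) (fun _ _ => .case_right _ _ _ _) _ _ h

theorem loop_body {M M' : Tm Loc Ch} (i : Ch) (h : AffSteps M M') :
    AffSteps (loop M i) (loop M' i) :=
  lift (loop · i) (fun _ _ => .loop_body _ _ _) _ _ h

end AffSteps

theorem AffStep.lift {M M' : Tm Loc Ch} (h : AffStep M M') (d : ℕ) :
    AffStep (M.lift d) (M'.lift d) := by
  induction h generalizing d with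
  | passage N a b M hab =>
    simp only [Tm.lift, ← lift_lift N (Nat.zero_le d)]
    exact .passage _ _ _ _ hab
  | prefixPop a N i M =>
    simp only [Tm.lift, ← lift_lift M (Nat.zero_le d)]
    exact .prefixPop _ _ _ _
  | reject i j M hij => exact .reject _ _ _ hij
  | pop_body a M M' _ ih => exact .pop_body _ _ _ (ih (d + 1))
  | _ => constructor <;> apply_rules

theorem AffStep.subst {M M' : Tm Loc Ch} (h : AffStep M M') (k : ℕ) (N : Tm Loc Ch) :
    AffStep (M.subst k N) (M'.subst k N) := by
  induction h generalizing k N with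
  | passage P a b M hab =>
    simp only [Tm.subst, ← lift_subst_of_le P N (Nat.zero_le k)]
    exact .passage _ _ _ _ hab
  | prefixPop a P i M =>
    simp only [Tm.subst, ← lift_subst_of_le M N (Nat.zero_le k)]
    exact .prefixPop _ _ _ _
  | reject i j M hij => exact .reject _ _ _ hij
  | pop_body a M M' _ ih => exact .pop_body _ _ _ (ih (k + 1) (N.lift 0))
  | _ => constructor <;> apply_rules

theorem AffSteps.lift {M M' : Tm Loc Ch} (h : AffSteps M M') (d : ℕ) :
    AffSteps (M.lift d) (M'.lift d) :=
  Relation.ReflTransGen.lift (Tm.lift · d) (fun _ _ s => s.lift d) _ _ h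

theorem AffSteps.subst_body {M M' : Tm Loc Ch} (h : AffSteps M M') (k : ℕ) (N : Tm Loc Ch) :
    AffSteps (M.subst k N) (M'.subst k N) :=
  Relation.ReflTransGen.lift (Tm.subst · k N) (fun _ _ s => s.subst k N) _ _ h

theorem AffSteps.subst_arg (M : Tm Loc Ch) (k : ℕ) {N N' : Tm Loc Ch} (h : AffSteps N N') :
    AffSteps (M.subst k N) (M.subst k N') := by
  induction M generalizing k N N' with
  | var n =>
    simp only [Tm.subst]
    split_ifs
    exacts [h, .refl, .refl]
  | push P a M ihP ihM => exact (push_left _ _ (ihP k h)).trans (push_right _ _ (ihM k h))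
  | pop a M ih => exact pop_body _ (ih (k + 1) (h.lift 0))
  | choice => exact .refl
  | caseOf M i P ihM ihP => exact (case_left _ _ (ihM k h)).trans (case_right _ _ (ihP k h))
  | loop M i ih => exact loop_body _ (ih k h)

namespace Tm

/-- Costing a case `M ; i -> N` as `weight M * (weight N + 1)` is what makes prefix(pop),
prefix(push) and associate decrease the weight. -/
def weight : Tm Loc Ch → ℕ
  | var _ => 1
  | choice _ => 1
  | push N _ M => weight N + 2 * weight M
  | pop _ M => weight M + 1
  | caseOf M _ N => weight M * (weight N + 1)
  | loop M _ => weight M + 1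

theorem one_le_weight (M : Tm Loc Ch) : 1 ≤ M.weight := by
  induction M with
  | caseOf M i N ihM ihN => simp only [weight]; nlinarith
  | _ => simp only [weight]; omega

theorem weight_lift (M : Tm Loc Ch) (d : ℕ) : (M.lift d).weight = M.weight := by
  induction M generalizing d with
  | var n => simp only [Tm.lift]; split_ifs <;> rfl
  | _ => simp_all [Tm.lift, weight]

end Tm

theorem AffStep.weight_lt {M M' : Tm Loc Ch} (h : AffStep M M') : M'.weight < M.weight := by
  induction h with
  | case_left M M' i N _ ih =>
    simp only [weight]
    exact Nat.mul_lt_mul_of_lt_of_le ih le_rfl (Nat.succ_pos _)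
  | case_right M i N N' _ ih =>
    simp only [weight]
    exact Nat.mul_lt_mul_of_le_of_lt le_rfl (by omega) M.one_le_weight
  | select i M | reject i _ M => simp only [weight]; have := M.one_le_weight; omega
  | prefixPop a N i M =>
    simp only [weight, weight_lift]; nlinarith [N.one_le_weight, M.one_le_weight]
  | prefixPush P a N i M => simp only [weight]; nlinarith [P.one_le_weight, M.one_le_weight]
  | assoc P i N M => simp only [weight]; nlinarith [P.one_le_weight, M.one_le_weight]
  | _ => simp only [weight, weight_lift] at *; omega

theorem affStep_wellFounded : WellFounded (flip (@AffStep Loc Ch)) :=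
  Subrelation.wf (fun h => h.weight_lt) (measure weight).wf

namespace AffStep

open Relation (Join)

theorem join_passage {N M P : Tm Loc Ch} {a b : Loc} (hab : a ≠ b)
    (h : AffStep (push N b (pop a M)) P) : Join AffSteps (pop a (push (N.lift 0) b M)) P := by
  cases h with
  | passage => exact ⟨_, .refl, .refl⟩
  | push_left _ N' _ _ hN =>
    exact ⟨pop a (push (N'.lift 0) b M), .single (.pop_body _ _ _ (.push_left _ _ _ _ (hN.lift 0))),
      .single (.passage _ _ _ _ hab)⟩
  | push_right _ _ _ _ hM =>
    cases hM with
    | pop_body _ _ M' hM =>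
      exact ⟨pop a (push (N.lift 0) b M'), .single (.pop_body _ _ _ (.push_right _ _ _ _ hM)),
        .single (.passage _ _ _ _ hab)⟩

theorem join_select {M P : Tm Loc Ch} {i : Ch} (h : AffStep (caseOf (choice i) i M) P) :
    Join AffSteps M P := by
  cases h with
  | select => exact ⟨M, .refl, .refl⟩
  | reject _ _ _ hii => exact absurd rfl hii
  | case_left _ _ _ _ h => cases h
  | case_right _ _ _ M' hM => exact ⟨M', .single hM, .single (.select _ _)⟩

theorem join_reject {M P : Tm Loc Ch} {i j : Ch} (hij : i ≠ j)
    (h : AffStep (caseOf (choice i) j M) P) : Join AffSteps (choice i) P := by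
  cases h with
  | select => exact absurd rfl hij
  | reject => exact ⟨_, .refl, .refl⟩
  | case_left _ _ _ _ h => cases h
  | case_right => exact ⟨_, .refl, .single (.reject _ _ _ hij)⟩

theorem join_prefixPop {N M P : Tm Loc Ch} {a : Loc} {i : Ch}
    (h : AffStep (caseOf (pop a N) i M) P) : Join AffSteps (pop a (caseOf N i (M.lift 0))) P := by
  cases h with
  | prefixPop => exact ⟨_, .refl, .refl⟩
  | case_left _ _ _ _ h =>
    cases h with
    | pop_body _ _ N' hN =>
      exact ⟨pop a (caseOf N' i (M.lift 0)), .single (.pop_body _ _ _ (.case_left _ _ _ _ hN)),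
        .single (.prefixPop _ _ _ _)⟩
  | case_right _ _ _ M' hM =>
    exact ⟨pop a (caseOf N i (M'.lift 0)),
      .single (.pop_body _ _ _ (.case_right _ _ _ _ (hM.lift 0))),
      .single (.prefixPop _ _ _ _)⟩

theorem join_prefixPush {P N M R : Tm Loc Ch} {a : Loc} {i : Ch}
    (h : AffStep (caseOf (push P a N) i M) R) : Join AffSteps (push P a (caseOf N i M)) R := by
  cases h with
  | prefixPush => exact ⟨_, .refl, .refl⟩
  | case_left _ _ _ _ h =>
    cases h with
    | passage _ c _ N₀ hca =>
      exact ⟨pop c (push (P.lift 0) a (caseOf N₀ i (M.lift 0))),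
        .head (.push_right _ _ _ _ (.prefixPop _ _ _ _)) (.single (.passage _ _ _ _ hca)),
        .head (.prefixPop _ _ _ _) (.single (.pop_body _ _ _ (.prefixPush _ _ _ _ _)))⟩
    | push_left _ P' _ _ hP =>
      exact ⟨push P' a (caseOf N i M), .single (.push_left _ _ _ _ hP),
        .single (.prefixPush _ _ _ _ _)⟩
    | push_right _ _ _ N' hN =>
      exact ⟨push P a (caseOf N' i M), .single (.push_right _ _ _ _ (.case_left _ _ _ _ hN)),
        .single (.prefixPush _ _ _ _ _)⟩
  | case_right _ _ _ M' hM =>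
    exact ⟨push P a (caseOf N i M'), .single (.push_right _ _ _ _ (.case_right _ _ _ _ hM)),
      .single (.prefixPush _ _ _ _ _)⟩

theorem join_assoc {P N M R : Tm Loc Ch} {i : Ch}
    (h : AffStep (caseOf (caseOf P i N) i M) R) : Join AffSteps (caseOf P i (caseOf N i M)) R := by
  cases h with
  | assoc => exact ⟨_, .refl, .refl⟩
  | case_left _ _ _ _ h =>
    cases h with
    | select => exact ⟨caseOf N i M, .single (.select _ _), .refl⟩
    | reject _ _ _ hji => exact ⟨_, .single (.reject _ _ _ hji), .single (.reject _ _ _ hji)⟩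
    | prefixPop c P₀ =>
      exact ⟨pop c (caseOf P₀ i (caseOf (N.lift 0) i (M.lift 0))), .single (.prefixPop _ _ _ _),
        .head (.prefixPop _ _ _ _) (.single (.pop_body _ _ _ (.assoc _ _ _ _)))⟩
    | prefixPush P₁ c P₀ =>
      exact ⟨push P₁ c (caseOf P₀ i (caseOf N i M)), .single (.prefixPush _ _ _ _ _),
        .head (.prefixPush _ _ _ _ _) (.single (.push_right _ _ _ _ (.assoc _ _ _ _)))⟩
    | assoc P₁ _ P₀ =>
      exact ⟨caseOf P₁ i (caseOf P₀ i (caseOf N i M)), .single (.assoc _ _ _ _),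
        .head (.assoc _ _ _ _) (.single (.case_right _ _ _ _ (.assoc _ _ _ _)))⟩
    | case_left _ P' _ _ hP =>
      exact ⟨caseOf P' i (caseOf N i M), .single (.case_left _ _ _ _ hP), .single (.assoc _ _ _ _)⟩
    | case_right _ _ _ N' hN =>
      exact ⟨caseOf P i (caseOf N' i M), .single (.case_right _ _ _ _ (.case_left _ _ _ _ hN)),
        .single (.assoc _ _ _ _)⟩
  | case_right _ _ _ M' hM =>
    exact ⟨caseOf P i (caseOf N i M'), .single (.case_right _ _ _ _ (.case_right _ _ _ _ hM)),
      .single (.assoc _ _ _ _)⟩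

end AffStep

open AffStep in
theorem affStep_locallyConfluent : Relation.LocallyConfluent (@AffStep Loc Ch) := by
  intro M N P h₁ h₂
  induction h₁ generalizing P with
  | passage _ _ _ _ hab => exact join_passage hab h₂
  | select => exact join_select h₂
  | reject _ _ _ hij => exact join_reject hij h₂
  | prefixPop => exact join_prefixPop h₂
  | prefixPush => exact join_prefixPush h₂
  | assoc => exact join_assoc h₂
  | push_left N N₁ a K hN ih =>
    cases h₂ with
    | passage _ _ _ _ hab => exact symm (join_passage hab (.push_left _ _ _ _ hN))
    | push_left _ N₂ _ _ hN₂ =>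
      obtain ⟨N₃, h₁₃, h₂₃⟩ := ih hN₂
      exact ⟨push N₃ a K, AffSteps.push_left a K h₁₃, AffSteps.push_left a K h₂₃⟩
    | push_right _ _ _ K₁ hK =>
      exact ⟨push N₁ a K₁, .single (.push_right _ _ _ _ hK), .single (.push_left _ _ _ _ hN)⟩
  | push_right N a K K₁ hK ih =>
    cases h₂ with
    | passage _ _ _ _ hab => exact symm (join_passage hab (.push_right _ _ _ _ hK))
    | push_left _ N₁ _ _ hN =>
      exact ⟨push N₁ a K₁, .single (.push_left _ _ _ _ hN), .single (.push_right _ _ _ _ hK)⟩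
    | push_right _ _ _ K₂ hK₂ =>
      obtain ⟨K₃, h₁₃, h₂₃⟩ := ih hK₂
      exact ⟨push N a K₃, AffSteps.push_right N a h₁₃, AffSteps.push_right N a h₂₃⟩
  | pop_body a K K₁ hK ih =>
    cases h₂ with
    | pop_body _ _ K₂ hK₂ =>
      obtain ⟨K₃, h₁₃, h₂₃⟩ := ih hK₂
      exact ⟨pop a K₃, AffSteps.pop_body a h₁₃, AffSteps.pop_body a h₂₃⟩
  | case_left K K₁ i R hK ih =>
    cases h₂ with
    | select | reject => cases hK
    | prefixPop => exact symm (join_prefixPop (.case_left _ _ _ _ hK))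
    | prefixPush => exact symm (join_prefixPush (.case_left _ _ _ _ hK))
    | assoc => exact symm (join_assoc (.case_left _ _ _ _ hK))
    | case_left _ K₂ _ _ hK₂ =>
      obtain ⟨K₃, h₁₃, h₂₃⟩ := ih hK₂
      exact ⟨caseOf K₃ i R, AffSteps.case_left i R h₁₃, AffSteps.case_left i R h₂₃⟩
    | case_right _ _ _ R₁ hR =>
      exact ⟨caseOf K₁ i R₁, .single (.case_right _ _ _ _ hR), .single (.case_left _ _ _ _ hK)⟩
  | case_right K i R R₁ hR ih =>
    cases h₂ with
    | select => exact symm (join_select (.case_right _ _ _ _ hR))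
    | reject _ _ _ hij => exact symm (join_reject hij (.case_right _ _ _ _ hR))
    | prefixPop => exact symm (join_prefixPop (.case_right _ _ _ _ hR))
    | prefixPush => exact symm (join_prefixPush (.case_right _ _ _ _ hR))
    | assoc => exact symm (join_assoc (.case_right _ _ _ _ hR))
    | case_left _ K₁ _ _ hK =>
      exact ⟨caseOf K₁ i R₁, .single (.case_left _ _ _ _ hK), .single (.case_right _ _ _ _ hR)⟩
    | case_right _ _ _ R₂ hR₂ =>
      obtain ⟨R₃, h₁₃, h₂₃⟩ := ih hR₂
      exact ⟨caseOf K i R₃, AffSteps.case_right K i h₁₃, AffSteps.case_right K i h₂₃⟩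
  | loop_body K K₁ i hK ih =>
    cases h₂ with
    | loop_body _ K₂ _ hK₂ =>
      obtain ⟨K₃, h₁₃, h₂₃⟩ := ih hK₂
      exact ⟨loop K₃ i, AffSteps.loop_body i h₁₃, AffSteps.loop_body i h₂₃⟩

namespace Par

protected theorem refl (M : Tm Loc Ch) : Par M M := by
  induction M with
  | var n => exact .var n
  | push N a M ihN ihM => exact .push _ _ _ _ _ ihN ihM
  | pop a M ih => exact .pop _ _ _ ih
  | choice i => exact .choice i
  | caseOf M i N ihM ihN => exact .caseOf _ _ _ _ _ ihM ihN
  | loop M i ih => exact .loop _ _ _ ih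

theorem lift {M M' : Tm Loc Ch} (h : Par M M') (d : ℕ) : Par (M.lift d) (M'.lift d) := by
  induction h generalizing d with
  | var | choice => exact .refl _
  | push N N' a M M' _ _ ihN ihM => exact .push _ _ _ _ _ (ihN d) (ihM d)
  | pop a M M' _ ih => exact .pop _ _ _ (ih (d + 1))
  | caseOf M M' i N N' _ _ ihM ihN => exact .caseOf _ _ _ _ _ (ihM d) (ihN d)
  | loop M M' i _ ih => exact .loop _ _ _ (ih d)
  | beta N N' a M M' _ _ ihN ihM =>
    rw [lift_subst_of_ge M' N' (Nat.zero_le d)]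
    exact .beta _ _ _ _ _ (ihN d) (ihM (d + 1))
  | unroll M M' i _ ih => exact .unroll _ _ _ (ih d)

theorem subst {M M' N N' : Tm Loc Ch} (h : Par M M') (k : ℕ) (hN : Par N N') :
    Par (M.subst k N) (M'.subst k N') := by
  induction h generalizing k N N' with
  | var n =>
    simp only [Tm.subst]
    split_ifs
    exacts [hN, .refl _, .refl _]
  | choice => exact .refl _
  | push P P' a M M' _ _ ihP ihM => exact .push _ _ _ _ _ (ihP k hN) (ihM k hN)
  | pop a M M' _ ih => exact .pop _ _ _ (ih (k + 1) (hN.lift 0))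
  | caseOf M M' i P P' _ _ ihM ihP => exact .caseOf _ _ _ _ _ (ihM k hN) (ihP k hN)
  | loop M M' i _ ih => exact .loop _ _ _ (ih k hN)
  | beta P P' a M M' _ _ ihP ihM =>
    rw [subst_subst M' P' N' (Nat.zero_le k)]
    exact .beta _ _ _ _ _ (ihP k hN) (ihM (k + 1) (hN.lift 0))
  | unroll M M' i _ ih => exact .unroll _ _ _ (ih k hN)

theorem diamond : Relation.Diamond (@Par Loc Ch) := by
  intro M N P h₁ h₂
  induction h₁ generalizing P with
  | var | choice => cases h₂; exact ⟨_, .refl _, .refl _⟩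
  | push A A' a B B' _ hB ihA ihB =>
    cases h₂ with
    | push _ A₂ _ _ B₂ hA₂ hB₂ =>
      obtain ⟨A₃, hA'₃, hA₂₃⟩ := ihA hA₂
      obtain ⟨B₃, hB'₃, hB₂₃⟩ := ihB hB₂
      exact ⟨Tm.push A₃ a B₃, .push _ _ _ _ _ hA'₃ hB'₃, .push _ _ _ _ _ hA₂₃ hB₂₃⟩
    | beta _ A₂ _ B₀ B₂ hA₂ hB₂ =>
      cases hB with
      | pop _ _ B₀' _ =>
        obtain ⟨A₃, hA'₃, hA₂₃⟩ := ihA hA₂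
        obtain ⟨_, hB'₃, hB₂₃⟩ := ihB (.pop a _ _ hB₂)
        cases hB'₃ with
        | pop _ _ B₃ hB'₃ =>
          cases hB₂₃ with
          | pop _ _ _ hB₂₃ => exact ⟨B₃.subst 0 A₃, .beta _ _ _ _ _ hA'₃ hB'₃, hB₂₃.subst 0 hA₂₃⟩
  | pop a B B' _ ih =>
    cases h₂ with
    | pop _ _ B₂ hB₂ =>
      obtain ⟨B₃, hB'₃, hB₂₃⟩ := ih hB₂
      exact ⟨Tm.pop a B₃, .pop _ _ _ hB'₃, .pop _ _ _ hB₂₃⟩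
  | caseOf A A' i B B' _ _ ihA ihB =>
    cases h₂ with
    | caseOf _ A₂ _ _ B₂ hA₂ hB₂ =>
      obtain ⟨A₃, hA'₃, hA₂₃⟩ := ihA hA₂
      obtain ⟨B₃, hB'₃, hB₂₃⟩ := ihB hB₂
      exact ⟨Tm.caseOf A₃ i B₃, .caseOf _ _ _ _ _ hA'₃ hB'₃, .caseOf _ _ _ _ _ hA₂₃ hB₂₃⟩
  | loop B B' i _ ih =>
    cases h₂ with
    | loop _ B₂ _ hB₂ =>
      obtain ⟨B₃, hB'₃, hB₂₃⟩ := ih hB₂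
      exact ⟨Tm.loop B₃ i, .loop _ _ _ hB'₃, .loop _ _ _ hB₂₃⟩
    | unroll _ B₂ _ hB₂ =>
      obtain ⟨B₃, hB'₃, hB₂₃⟩ := ih hB₂
      exact ⟨Tm.caseOf B₃ i (Tm.loop B₃ i), .unroll _ _ _ hB'₃,
        .caseOf _ _ _ _ _ hB₂₃ (.loop _ _ _ hB₂₃)⟩
  | beta A A' a B B' _ _ ihA ihB =>
    cases h₂ with
    | push _ A₂ _ _ _ hA₂ hB₂ =>
      cases hB₂ with
      | pop _ _ B₂ hB₂ =>
        obtain ⟨A₃, hA'₃, hA₂₃⟩ := ihA hA₂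
        obtain ⟨B₃, hB'₃, hB₂₃⟩ := ihB hB₂
        exact ⟨B₃.subst 0 A₃, hB'₃.subst 0 hA'₃, .beta _ _ _ _ _ hA₂₃ hB₂₃⟩
    | beta _ A₂ _ _ B₂ hA₂ hB₂ =>
      obtain ⟨A₃, hA'₃, hA₂₃⟩ := ihA hA₂
      obtain ⟨B₃, hB'₃, hB₂₃⟩ := ihB hB₂
      exact ⟨B₃.subst 0 A₃, hB'₃.subst 0 hA'₃, hB₂₃.subst 0 hA₂₃⟩
  | unroll B B' i _ ih =>
    cases h₂ with
    | loop _ B₂ _ hB₂ =>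
      obtain ⟨B₃, hB'₃, hB₂₃⟩ := ih hB₂
      exact ⟨Tm.caseOf B₃ i (Tm.loop B₃ i), .caseOf _ _ _ _ _ hB'₃ (.loop _ _ _ hB'₃),
        .unroll _ _ _ hB₂₃⟩
    | unroll _ B₂ _ hB₂ =>
      obtain ⟨B₃, hB'₃, hB₂₃⟩ := ih hB₂
      exact ⟨Tm.caseOf B₃ i (Tm.loop B₃ i), .caseOf _ _ _ _ _ hB'₃ (.loop _ _ _ hB'₃),
        .caseOf _ _ _ _ _ hB₂₃ (.loop _ _ _ hB₂₃)⟩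

end Par

def ParJoin (M Q : Tm Loc Ch) : Prop :=
  ∃ M' Q', AffSteps M M' ∧ AffSteps Q Q' ∧ Par M' Q'

theorem parJoin_of_passage {N M Q : Tm Loc Ch} {a b : Loc} (hab : a ≠ b)
    (h : Par (push N b (pop a M)) Q) : ParJoin (pop a (push (N.lift 0) b M)) Q := by
  cases h with
  | push _ N' _ _ _ hN hM =>
    cases hM with
    | pop _ _ M' hM =>
      exact ⟨_, Tm.pop a (Tm.push (N'.lift 0) b M'), .refl, .single (.passage _ _ _ _ hab),
        .pop _ _ _ (.push _ _ _ _ _ (hN.lift 0) hM)⟩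
  | beta => exact absurd rfl hab

theorem parJoin_of_select {M Q : Tm Loc Ch} {i : Ch} (h : Par (caseOf (choice i) i M) Q) :
    ParJoin M Q := by
  cases h with
  | caseOf _ _ _ _ M' hi hM =>
    cases hi
    exact ⟨M, M', .refl, .single (.select _ _), hM⟩

theorem parJoin_of_reject {M Q : Tm Loc Ch} {i j : Ch} (hij : i ≠ j)
    (h : Par (caseOf (choice i) j M) Q) : ParJoin (choice i) Q := by
  cases h with
  | caseOf _ _ _ _ _ hi _ =>
    cases hi
    exact ⟨_, _, .refl, .single (.reject _ _ _ hij), .refl _⟩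

theorem parJoin_of_prefixPop {N M Q : Tm Loc Ch} {a : Loc} {i : Ch}
    (h : Par (caseOf (pop a N) i M) Q) : ParJoin (pop a (caseOf N i (M.lift 0))) Q := by
  cases h with
  | caseOf _ _ _ _ M' hN hM =>
    cases hN with
    | pop _ _ N' hN =>
      exact ⟨_, Tm.pop a (Tm.caseOf N' i (M'.lift 0)), .refl, .single (.prefixPop _ _ _ _),
        .pop _ _ _ (.caseOf _ _ _ _ _ hN (hM.lift 0))⟩

theorem parJoin_of_prefixPush {P N M Q : Tm Loc Ch} {a : Loc} {i : Ch}
    (h : Par (caseOf (push P a N) i M) Q) : ParJoin (push P a (caseOf N i M)) Q := by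
  cases h with
  | caseOf _ _ _ _ M' hPN hM =>
    cases hPN with
    | push _ P' _ _ N' hP hN =>
      exact ⟨_, Tm.push P' a (Tm.caseOf N' i M'), .refl, .single (.prefixPush _ _ _ _ _),
        .push _ _ _ _ _ hP (.caseOf _ _ _ _ _ hN hM)⟩
    | beta _ P' _ N₀ N₀' hP hN₀ =>
      -- a marked beta-redex `[P]a.a<x>.N₀`: one prefix(pop) step under the push restores it
      refine ⟨Tm.push P a (Tm.pop a (Tm.caseOf N₀ i (M.lift 0))), _,
        .single (.push_right _ _ _ _ (.prefixPop _ _ _ _)), .refl, ?_⟩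
      simpa only [Tm.subst, subst_lift] using
        Par.beta _ _ _ _ (Tm.caseOf N₀' i (M'.lift 0)) hP (.caseOf _ _ _ _ _ hN₀ (hM.lift 0))

theorem parJoin_of_assoc {P N M Q : Tm Loc Ch} {i : Ch}
    (h : Par (caseOf (caseOf P i N) i M) Q) : ParJoin (caseOf P i (caseOf N i M)) Q := by
  cases h with
  | caseOf _ _ _ _ M' hPN hM =>
    cases hPN with
    | caseOf _ P' _ _ N' hP hN =>
      exact ⟨_, Tm.caseOf P' i (Tm.caseOf N' i M'), .refl, .single (.assoc _ _ _ _),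
        .caseOf _ _ _ _ _ hP (.caseOf _ _ _ _ _ hN hM)⟩

theorem AffStep.parJoin {M M₁ Q : Tm Loc Ch} (hs : AffStep M M₁) (hQ : Par M Q) :
    ParJoin M₁ Q := by
  cases hs with
  | passage _ _ _ _ hab => exact parJoin_of_passage hab hQ
  | select => exact parJoin_of_select hQ
  | reject _ _ _ hij => exact parJoin_of_reject hij hQ
  | prefixPop => exact parJoin_of_prefixPop hQ
  | prefixPush => exact parJoin_of_prefixPush hQ
  | assoc => exact parJoin_of_assoc hQ
  | push_left N N₁ a K hN =>
    cases hQ with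
    | push _ N' _ _ K' hN' hK =>
      obtain ⟨N₂, N'₁, h₁, h₂, hp⟩ := hN.parJoin hN'
      exact ⟨Tm.push N₂ a K, Tm.push N'₁ a K', .push_left a K h₁, .push_left a K' h₂,
        .push _ _ _ _ _ hp hK⟩
    | beta _ N' _ K₀ K₀' hN' hK₀ =>
      obtain ⟨N₂, N'₁, h₁, h₂, hp⟩ := hN.parJoin hN'
      exact ⟨Tm.push N₂ a (Tm.pop a K₀), K₀'.subst 0 N'₁, .push_left a _ h₁, .subst_arg K₀' 0 h₂,
        .beta _ _ _ _ _ hp hK₀⟩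
  | push_right N a K K₁ hK =>
    cases hQ with
    | push _ N' _ _ K' hN' hK' =>
      obtain ⟨K₂, K'₁, h₁, h₂, hp⟩ := hK.parJoin hK'
      exact ⟨Tm.push N a K₂, Tm.push N' a K'₁, .push_right N a h₁, .push_right N' a h₂,
        .push _ _ _ _ _ hN' hp⟩
    | beta _ N' _ K₀ K₀' hN' hK₀ =>
      cases hK with
      | pop_body _ _ K₀₁ hK₀₁ =>
        obtain ⟨K₂, K'₁, h₁, h₂, hp⟩ := hK₀₁.parJoin hK₀
        exact ⟨Tm.push N a (Tm.pop a K₂), K'₁.subst 0 N', .push_right N a (.pop_body a h₁),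
          h₂.subst_body 0 N', .beta _ _ _ _ _ hN' hp⟩
  | pop_body a K K₁ hK =>
    cases hQ with
    | pop _ _ K' hK' =>
      obtain ⟨K₂, K'₁, h₁, h₂, hp⟩ := hK.parJoin hK'
      exact ⟨Tm.pop a K₂, Tm.pop a K'₁, .pop_body a h₁, .pop_body a h₂, .pop _ _ _ hp⟩
  | case_left K K₁ i R hK =>
    cases hQ with
    | caseOf _ K' _ _ R' hK' hR =>
      obtain ⟨K₂, K'₁, h₁, h₂, hp⟩ := hK.parJoin hK'
      exact ⟨Tm.caseOf K₂ i R, Tm.caseOf K'₁ i R', .case_left i R h₁, .case_left i R' h₂,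
        .caseOf _ _ _ _ _ hp hR⟩
  | case_right K i R R₁ hR =>
    cases hQ with
    | caseOf _ K' _ _ R' hK' hR' =>
      obtain ⟨R₂, R'₁, h₁, h₂, hp⟩ := hR.parJoin hR'
      exact ⟨Tm.caseOf K i R₂, Tm.caseOf K' i R'₁, .case_right K i h₁, .case_right K' i h₂,
        .caseOf _ _ _ _ _ hK' hp⟩
  | loop_body K K₁ i hK =>
    cases hQ with
    | loop _ K' _ hK' =>
      obtain ⟨K₂, K'₁, h₁, h₂, hp⟩ := hK.parJoin hK'
      exact ⟨Tm.loop K₂ i, Tm.loop K'₁ i, .loop_body i h₁, .loop_body i h₂, .loop _ _ _ hp⟩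
    | unroll _ K' _ hK' =>
      obtain ⟨K₂, K'₁, h₁, h₂, hp⟩ := hK.parJoin hK'
      exact ⟨Tm.loop K₂ i, Tm.caseOf K'₁ i (Tm.loop K'₁ i), .loop_body i h₁,
        (AffSteps.case_left i _ h₂).trans (AffSteps.case_right _ i (.loop_body i h₂)),
        .unroll _ _ _ hp⟩
termination_by sizeOf M

/-- Complete reduction satisfies the diamond property. -/
theorem complete_reduction_diamond (M N P : Tm Loc Ch) (h1 : Comp M N) (h2 : Comp M P) :
    ∃ Q : Tm Loc Ch, Comp N Q ∧ Comp P Q := by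
  obtain ⟨P₁, hMP₁, hP₁N, hN⟩ := h1
  obtain ⟨P₂, hMP₂, hP₂P, hP⟩ := h2
  have hconf : Relation.Confluent (@AffStep Loc Ch) :=
    affStep_locallyConfluent.confluent affStep_wellFounded
  have hcarry := hconf.exists_reflTransGen_of_normal affStep_wellFounded
    (fun _ _ _ => AffStep.parJoin)
  obtain ⟨Q₀, hP₁Q₀, hP₂Q₀⟩ := Par.diamond hMP₁ hMP₂
  obtain ⟨Q₁, hQ₀Q₁, hNQ₁⟩ := hcarry hP₁N hN hP₁Q₀
  obtain ⟨Q₂, hQ₀Q₂, hPQ₂⟩ := hcarry hP₂P hP hP₂Q₀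
  obtain ⟨Q, hQ₀Q, hQ⟩ := Relation.exists_normal affStep_wellFounded Q₀
  exact ⟨Q, ⟨Q₁, hNQ₁, hconf.reflTransGen_normal hQ₀Q hQ hQ₀Q₁, hQ⟩,
    ⟨Q₂, hPQ₂, hconf.reflTransGen_normal hQ₀Q hQ hQ₀Q₂, hQ⟩⟩
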